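/- Let k, n, t be non-negative integers with s₂(n) ≥ 2, ν(n) > 0, 2n − 2^(ν(n)+1) ≤ t ≤ 2n + 2, and ⌊(t+1)/2⌋ ≤ k ≤ n + 1. Then ν(C(t, k)) ≥ s₂(n) − 1. -/
import Mathlib


/-- binary digit sum -/
def s2 (n : ℕ) : ℕ := (Nat.digits 2 n).sum

/-- 2-adic valuation -/
def nu (n : ℕ) : ℕ := padicValNat 2 n

lemma s2_zero : s2 0 = 0 := by simp [s2]

lemma s2_one : s2 1 = 1 := by simp [s2]

lemma s2_two_mul (m : ℕ) : s2 (2 * m) = s2 m := by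
  rcases Nat.eq_zero_or_pos m with rfl | hm
  · simp [s2]
  · unfold s2
    rw [Nat.digits_def' (by norm_num) (by omega)]
    have h1 : 2 * m % 2 = 0 := by omega
    have h2 : 2 * m / 2 = m := by omega
    rw [h1, h2]
    simp

lemma s2_two_mul_add_one (m : ℕ) : s2 (2 * m + 1) = s2 m + 1 := by
  unfold s2
  rw [Nat.digits_def' (by norm_num) (by omega)]
  have h1 : (2 * m + 1) % 2 = 1 := by omega
  have h2 : (2 * m + 1) / 2 = m := by omega
  rw [h1, h2]
  simp [add_comm]

lemma s2_add_le_aux : ∀ N a b : ℕ, a + b ≤ N → s2 (a + b) ≤ s2 a + s2 b := by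
  intro N
  induction N with
  | zero =>
    intro a b h
    have ha : a = 0 := by omega
    have hb : b = 0 := by omega
    subst ha; subst hb; simp [s2]
  | succ N ih =>
    intro a b h
    obtain ⟨a', rfl | rfl⟩ := Nat.even_or_odd' a <;>
      obtain ⟨b', rfl | rfl⟩ := Nat.even_or_odd' b
    · rw [show 2*a' + 2*b' = 2*(a'+b') by ring, s2_two_mul, s2_two_mul, s2_two_mul]
      rcases Nat.eq_zero_or_pos (a' + b') with h0 | h0
      · have h1 : a' = 0 := by omega
        have h2 : b' = 0 := by omega
        simp [h1, h2]
      · exact ih a' b' (by omega)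
    · rw [show 2*a' + (2*b'+1) = 2*(a'+b') + 1 by ring, s2_two_mul_add_one, s2_two_mul,
        s2_two_mul_add_one]
      rcases Nat.eq_zero_or_pos (a' + b') with h0 | h0
      · have h1 : a' = 0 := by omega
        have h2 : b' = 0 := by omega
        simp [h1, h2]
      · have := ih a' b' (by omega); omega
    · rw [show 2*a' + 1 + 2*b' = 2*(a'+b') + 1 by ring, s2_two_mul_add_one, s2_two_mul,
        s2_two_mul_add_one]
      rcases Nat.eq_zero_or_pos (a' + b') with h0 | h0
      · have h1 : a' = 0 := by omega
        have h2 : b' = 0 := by omega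
        simp [h1, h2]
      · have := ih a' b' (by omega); omega
    · rw [show 2*a' + 1 + (2*b'+1) = 2*(a'+b'+1) by ring, s2_two_mul, s2_two_mul_add_one,
        s2_two_mul_add_one]
      have h1 : s2 (a' + b' + 1) ≤ s2 (a' + b') + s2 1 := ih (a'+b') 1 (by omega)
      have h2 : s2 (a' + b') ≤ s2 a' + s2 b' := ih a' b' (by omega)
      have h3 : s2 1 = 1 := s2_one
      omega

lemma s2_add_le (a b : ℕ) : s2 (a + b) ≤ s2 a + s2 b := s2_add_le_aux (a+b) a b le_rfl

lemma s2_pow_mul (e m : ℕ) : s2 (2 ^ e * m) = s2 m := by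
  rcases Nat.eq_zero_or_pos m with rfl | hm
  · simp
  · unfold s2
    rw [Nat.digits_base_pow_mul (by norm_num) hm]
    simp

lemma digits_len_le {c e : ℕ} (hc : c < 2 ^ e) : (Nat.digits 2 c).length ≤ e := by
  rcases Nat.eq_zero_or_pos c with rfl | hc0
  · simp
  by_contra hlen
  have h1 : 2 ^ (Nat.digits 2 c).length ≤ 2 * c :=
    Nat.base_pow_length_digits_le 2 c (by norm_num) (by omega)
  have h2 : 2 ^ (e+1) ≤ 2 ^ (Nat.digits 2 c).length := Nat.pow_le_pow_right (by norm_num) (by omega)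
  have h3 : 2 ^ (e+1) = 2 * 2 ^ e := by rw [pow_succ]; ring
  omega

lemma s2_split {e M c : ℕ} (hc : c < 2 ^ e) : s2 (2 ^ e * M + c) = s2 M + s2 c := by
  rcases Nat.eq_zero_or_pos M with rfl | hM
  · simp [s2]
  have hlen : (Nat.digits 2 c).length ≤ e := digits_len_le hc
  have key := Nat.digits_append_zeroes_append_digits (b := 2) (k := e - (Nat.digits 2 c).length)
    (m := M) (n := c) (by norm_num) hM
  rw [show (Nat.digits 2 c).length + (e - (Nat.digits 2 c).length) = e by omega] at key
  have h2 : s2 (c + 2 ^ e * M) = s2 c + s2 M := by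
    unfold s2
    rw [← key]
    simp [List.sum_append]
  rw [add_comm (2^e * M) c, h2, add_comm]

lemma nu_choose_eq {j m : ℕ} (h : j ≤ m) :
    nu (m.choose j) = s2 j + s2 (m - j) - s2 m := by
  have := @sub_one_mul_padicValNat_choose_eq_sub_sum_digits 2 j m ⟨Nat.prime_two⟩ h
  simpa [nu, s2] using this

theorem stmt6 (k n t : ℕ) (hs : 2 ≤ s2 n) (hν : 0 < nu n)
    (ht1 : 2 * n - 2 ^ (nu n + 1) ≤ t) (ht2 : t ≤ 2 * n + 2)
    (hk1 : (t + 1) / 2 ≤ k) (hk2 : k ≤ n + 1) :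
    s2 n - 1 ≤ nu (Nat.choose t k) := by
  set v := nu n with hv
  have hn0 : n ≠ 0 := by
    rintro rfl
    rw [s2_zero] at hs
    omega
  -- extract odd part
  have hdvd : 2 ^ v ∣ n := pow_padicValNat_dvd
  obtain ⟨m, hm⟩ := hdvd
  have hmodd : ¬ 2 ∣ m := by
    rintro ⟨m', hm'⟩
    have hd : 2 ^ (v + 1) ∣ n := Dvd.intro m' (by rw [hm, hm']; ring)
    have hle := (padicValNat_dvd_iff_le (p := 2) hn0).mp hd
    have hnu : nu n = padicValNat 2 n := rfl
    omega
  obtain ⟨M, hM⟩ : ∃ M, m = 2 * M + 1 := ⟨m / 2, by omega⟩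
  have hP2 : 2 ≤ 2 ^ v := by
    calc 2 = 2 ^ 1 := rfl
    _ ≤ 2 ^ v := Nat.pow_le_pow_right (by norm_num) hν
  have hs2n : s2 n = s2 M + 1 := by
    rw [hm, hM, s2_pow_mul, s2_two_mul_add_one]
  set s := s2 M with hsM
  have hs1 : 1 ≤ s := by omega
  have hM1 : 1 ≤ M := by
    rcases Nat.eq_zero_or_pos M with rfl | h
    · rw [s2_zero] at hsM; omega
    · exact h
  set P := 2 ^ v with hPdef
  have h2P : (2:ℕ) ^ (v + 1) = 2 * P := by rw [hPdef, pow_succ]; ring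
  have h4P : (2:ℕ) ^ (v + 2) = 4 * P := by rw [hPdef, pow_succ, pow_succ]; ring
  have hnval : n = 2 * (P * M) + P := by rw [hm, hM, hPdef]; ring
  set q := P * M with hq
  have hq2 : 2 ^ (v + 1) * M = 2 * q := by rw [h2P, hq]; ring
  have hq4 : 2 ^ (v + 2) * M = 4 * q := by rw [h4P, hq]; ring
  have hqP : P ≤ q := by rw [hq]; exact Nat.le_mul_of_pos_right P hM1
  -- basic ranges
  have htlo : 4 * q ≤ t := by omega
  have hthi : t ≤ 4 * q + 2 * P + 2 := by omega
  have hkt : k < t := by omega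
  set u := t - 4 * q with hu
  set c := k - 2 * q with hc
  have hklo : 2 * q ≤ k := by omega
  have hcP : c ≤ P + 1 := by omega
  have huhi : u ≤ 2 * P + 2 := by omega
  have hu2c : u ≤ 2 * c := by omega
  have hs2t : s2 t = s + s2 u := by
    have ht : t = 2 ^ (v + 2) * M + u := by rw [hq4]; omega
    rw [ht, s2_split (by rw [h4P]; omega)]
  have hs2k : s2 k = s + s2 c := by
    have hk : k = 2 ^ (v + 1) * M + c := by rw [hq2]; omega
    rw [hk, s2_split (by rw [h2P]; omega)]
  -- key inequality
  have hmain : s + s2 t ≤ s2 k + s2 (t - k) := by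
    rcases le_or_gt c u with hcu | hcu
    · -- case A
      have hs2j : s2 (t - k) = s + s2 (u - c) := by
        have hj : t - k = 2 ^ (v + 1) * M + (u - c) := by rw [hq2]; omega
        rw [hj, s2_split (by rw [h2P]; omega)]
      have hsub : s2 u ≤ s2 c + s2 (u - c) := by
        have := s2_add_le c (u - c)
        rw [show c + (u - c) = u by omega] at this
        exact this
      omega
    · -- case B
      obtain ⟨M', rfl⟩ : ∃ M', M = M' + 1 := ⟨M - 1, by omega⟩
      set w := c - u with hw
      have hw1 : 1 ≤ w := by omega
      have hwP : w ≤ P + 1 := by omega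
      set e := 2 * P - w with he
      have heP : 1 ≤ e ∧ e < 2 * P := by omega
      have hq2' : 2 ^ (v + 1) * M' = 2 * (P * M') := by rw [h2P]; ring
      have hq'val : q = P * M' + P := by rw [hq]; ring
      have hs2j : s2 (t - k) = s2 M' + s2 e := by
        have hj : t - k = 2 ^ (v + 1) * M' + e := by rw [hq2']; omega
        rw [hj, s2_split (by rw [h2P]; omega)]
      have hM' : s ≤ s2 M' + 1 := by
        have h1 := s2_add_le M' 1
        have h2 : s2 1 = 1 := s2_one
        omega
      have hkey : s2 u + 1 ≤ s2 c + s2 e := by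
        have h1 : s2 (2 ^ (v+1) * 1 + u) = s2 1 + s2 u := s2_split (by rw [h2P]; omega)
        have h2 : s2 (c + e) ≤ s2 c + s2 e := s2_add_le c e
        rw [show c + e = 2 ^ (v+1) * 1 + u by rw [h2P]; omega] at h2
        have h3 : s2 1 = 1 := s2_one
        omega
      omega
  have hkummer := nu_choose_eq (le_of_lt hkt)
  omega
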